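/- arXiv:1611.01356 — 4 statements merged into one kernel-verified Lean document; each statement's English description precedes it below -/
import Mathlib

section
/- Suppose T₁, T₂, T₃, T₄ ∈ SL(2,ℂ) satisfy T₁T₂T₃T₄ = I and there are reflection matrices Σ₁, Σ₂, Σ₃, Σ₄ (matrices Σ with det Σ = −1 and conj(Σ) = Σ⁻¹) such that T_j = Σ_j·conj(Σ_{j+1}) for j ∈ ℤ/4 (indices mod 4). Then the traces of T₁, T₂, T₃, T₄, T₁T₂, and T₂T₃ are all real. -/
open Matrix

private lemma trace_map_conj (M : Matrix (Fin 2) (Fin 2) ℂ) :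
    (M.map (starRingEnd ℂ)).trace = (starRingEnd ℂ) M.trace := by
  simp [Matrix.trace_fin_two, Matrix.map_apply]

private lemma trace_inv_eq (M : Matrix (Fin 2) (Fin 2) ℂ) (h : M.det = 1) :
    M⁻¹.trace = M.trace := by
  rw [Matrix.inv_def, h]
  simp [Matrix.adjugate_fin_two, Matrix.trace_fin_two, add_comm]

private lemma key (A B : Matrix (Fin 2) (Fin 2) ℂ)
    (hA : A.map (starRingEnd ℂ) = A⁻¹) (hB : B.map (starRingEnd ℂ) = B⁻¹)
    (hdA : A.det = -1) (hdB : B.det = -1) :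
    ((A * B.map (starRingEnd ℂ)).trace).im = 0 := by
  have hAu : IsUnit A.det := by rw [hdA]; exact isUnit_one.neg
  have hBu : IsUnit B.det := by rw [hdB]; exact isUnit_one.neg
  set M := A * B.map (starRingEnd ℂ) with hM
  have hdetM : M.det = 1 := by
    rw [hM, hB, Matrix.det_mul, Matrix.det_nonsing_inv, hdA, hdB]
    norm_num
  have hconjM : M.map (starRingEnd ℂ) = A⁻¹ * B := by
    rw [hM, hB, Matrix.map_mul, hA]
    congr 1
    rw [← hB, Matrix.map_map]
    have : ((starRingEnd ℂ) : ℂ → ℂ) ∘ ((starRingEnd ℂ) : ℂ → ℂ) = id := by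
      funext z; simp
    rw [this, Matrix.map_id]
  have hMinv : M⁻¹ = B * A⁻¹ := by
    rw [hM, hB, Matrix.mul_inv_rev, Matrix.nonsing_inv_nonsing_inv _ hBu]
  have htr : (starRingEnd ℂ) M.trace = M.trace := by
    rw [← trace_map_conj, hconjM, Matrix.trace_mul_comm, ← hMinv, trace_inv_eq _ hdetM]
  exact Complex.conj_eq_iff_im.mp htr

theorem stmt_4 (T S : Fin 4 → Matrix (Fin 2) (Fin 2) ℂ)
    (hdetT : ∀ j, (T j).det = 1)
    (hprod : T 0 * T 1 * T 2 * T 3 = 1)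
    (hdetS : ∀ j, (S j).det = -1)
    (hconjS : ∀ j, (S j).map (starRingEnd ℂ) = (S j)⁻¹)
    (hT : ∀ j, T j = S j * (S (j + 1)).map (starRingEnd ℂ)) :
    (∀ j, ((T j).trace).im = 0) ∧
    ((T 0 * T 1).trace).im = 0 ∧ ((T 1 * T 2).trace).im = 0 := by
  have hSu : ∀ j, IsUnit (S j).det := fun j => by rw [hdetS j]; exact isUnit_one.neg
  have hcancel : ∀ j, (S j).map (starRingEnd ℂ) * S j = 1 := fun j => by
    rw [hconjS j]; exact Matrix.nonsing_inv_mul _ (hSu j)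
  have hpair : ∀ i j : Fin 4, T i * T j = S i * (S (j+1)).map (starRingEnd ℂ) →
      ((T i * T j).trace).im = 0 := fun i j h => by
    rw [h]; exact key _ _ (hconjS i) (hconjS (j+1)) (hdetS i) (hdetS (j+1))
  refine ⟨fun j => by rw [hT j]; exact key _ _ (hconjS j) (hconjS (j+1)) (hdetS j) (hdetS (j+1)),
    ?_, ?_⟩
  · apply hpair 0 1
    rw [hT 0, hT 1]
    show S 0 * (S 1).map (starRingEnd ℂ) * (S 1 * (S 2).map (starRingEnd ℂ)) = _
    rw [mul_assoc, ← mul_assoc ((S 1).map (starRingEnd ℂ)), hcancel 1, one_mul]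
    rfl
  · apply hpair 1 2
    rw [hT 1, hT 2]
    show S 1 * (S 2).map (starRingEnd ℂ) * (S 2 * (S 3).map (starRingEnd ℂ)) = _
    rw [mul_assoc, ← mul_assoc ((S 2).map (starRingEnd ℂ)), hcancel 2, one_mul]
    rfl
end

section
/- With cos α = t₂/2, sin α = √(4−t₂²)/2 (t₂ ∈ (−2,2)), and a₁ ∈ ℂ determined by 2Re(−i e^{−iα} a₁) = t₁ and 2Re(−i a₁) = t₁₂, one has 1 − |a₁|² = (t₁² + t₂² + t₁₂² − t₁t₂t₁₂ − 4)/(t₂² − 4). -/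
open Complex

lemma sq_norm_of_neg_I_mul_eq {a : ℂ} {u v : ℝ} (h : -I * a = (1 / 2) * ((u : ℂ) - I * v)) :
    ‖a‖ ^ 2 = (u ^ 2 + v ^ 2) / 4 := by
  have hnorm : ‖a‖ = ‖-I * a‖ := by simp
  rw [hnorm, h, Complex.sq_norm, normSq_apply]
  simp only [mul_re, mul_im, sub_re, sub_im, ofReal_re, ofReal_im, I_re, I_im]
  norm_num
  ring

lemma sq_div_half_sqrt {c : ℝ} (hc : 0 ≤ c) (x : ℝ) :
    (x / (Real.sqrt c / 2)) ^ 2 = 4 * x ^ 2 / c := by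
  rw [div_div_eq_mul_div, div_pow, mul_pow, Real.sq_sqrt hc]
  ring

theorem stmt_7 (t₁ t₂ t₁₂ : ℝ) (h₂ : t₂ ∈ Set.Ioo (-2 : ℝ) 2) (a₁ : ℂ)
    (ha₁ : -Complex.I * a₁
      = (1/2) * ((t₁₂ : ℂ) - Complex.I *
          (((t₁₂ * (t₂/2) - t₁) / (Real.sqrt (4 - t₂^2) / 2) : ℝ) : ℂ))) :
    1 - ‖a₁‖ ^ 2
      = (t₁^2 + t₂^2 + t₁₂^2 - t₁*t₂*t₁₂ - 4) / (t₂^2 - 4) := by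
  have hpos : 0 < 4 - t₂ ^ 2 := by nlinarith [h₂.1, h₂.2]
  rw [sq_norm_of_neg_I_mul_eq ha₁, sq_div_half_sqrt hpos.le]
  have hne : t₂ ^ 2 - 4 ≠ 0 := by linarith
  field_simp
  ring
end

section
/- With cos α = t₂/2, sin α = √(4−t₂²)/2 (t₂ ∈ (−2,2)), a₁ defined by −i a₁ = (1/2)(t₁₂ − i(t₁₂ cos α − t₁)/sin α) and a₂ defined by i·conj(a₂) = (1/2)(t₃ + i(t₃ cos α − t₂₃)/sin α), one has 2Re(a₂·conj(a₁)) = (2t₁t₂₃ + 2t₃t₁₂ − t₁t₂t₃ − t₂t₁₂t₂₃)/(4 − t₂²). -/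
/-!
Both defining relations say that `a₁ = (c₁ + i t₁₂) / 2` and `a₂ = (c₂ + i t₃) / 2` with
`c₁ = (t₁₂ cos α - t₁) / sin α` and `c₂ = (t₃ cos α - t₂₃) / sin α`. Hence `2 Re(a₂ ā₁) = (c₁ c₂ + t₁₂ t₃) / 2`,
and `4 sin² α = 4 - t₂²` turns `c₁ c₂` into the stated rational function.
-/

open Complex ComplexConjugate

lemma eq_half_of_neg_I_mul_eq {z : ℂ} {x y : ℝ} (h : -I * z = (1 / 2) * (x - I * y)) :
    z = (1 / 2) * (y + I * x) := by
  have hz : z = I * (-I * z) := by ring_nf; simp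
  rw [hz, h]
  ring_nf
  simp only [I_sq]
  ring

lemma eq_half_of_I_mul_conj_eq {z : ℂ} {x y : ℝ} (h : I * conj z = (1 / 2) * (x + I * y)) :
    z = (1 / 2) * (y + I * x) := by
  have hz : conj z = -I * (I * conj z) := by ring_nf; simp
  rw [← conj_conj z, hz, h]
  simp only [map_mul, map_neg, map_add, conj_I, conj_ofReal, map_div₀, map_one, map_ofNat]
  ring_nf
  simp only [I_sq]
  ring

lemma re_half_mul_conj_half (x y u v : ℝ) :
    ((1 / 2) * (y + I * x) * conj ((1 / 2) * (v + I * u))).re = (y * v + x * u) / 4 := by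
  simp [mul_re, mul_im]
  ring

theorem stmt_8 (t₁ t₂ t₃ t₁₂ t₂₃ : ℝ) (h₂ : t₂ ∈ Set.Ioo (-2 : ℝ) 2) (a₁ a₂ : ℂ)
    (ha₁ : -Complex.I * a₁
      = (1/2) * ((t₁₂ : ℂ) - Complex.I *
          (((t₁₂ * (t₂/2) - t₁) / (Real.sqrt (4 - t₂^2) / 2) : ℝ) : ℂ)))
    (ha₂ : Complex.I * starRingEnd ℂ a₂
      = (1/2) * ((t₃ : ℂ) + Complex.I *
          (((t₃ * (t₂/2) - t₂₃) / (Real.sqrt (4 - t₂^2) / 2) : ℝ) : ℂ))) :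
    2 * (a₂ * starRingEnd ℂ a₁).re
      = (2*t₁*t₂₃ + 2*t₃*t₁₂ - t₁*t₂*t₃ - t₂*t₁₂*t₂₃) / (4 - t₂^2) := by
  have hpos : 0 < 4 - t₂ ^ 2 := by nlinarith [h₂.1, h₂.2]
  have hsin : Real.sqrt (4 - t₂ ^ 2) ^ 2 = 4 - t₂ ^ 2 := Real.sq_sqrt hpos.le
  have hsin_ne : Real.sqrt (4 - t₂ ^ 2) ≠ 0 := (Real.sqrt_pos.mpr hpos).ne'
  rw [eq_half_of_I_mul_conj_eq ha₂, eq_half_of_neg_I_mul_eq ha₁, re_half_mul_conj_half]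
  field_simp
  rw [hsin]
  ring
end

section
/- Let T₁(z) = e^{2πiα} z (elliptic, α ∉ ℤ) and T₂(z) = z + c (parabolic, c ≠ 0) be Möbius transformations. If σ₁, σ₂, σ₃ are reflections in circles/lines C₁, C₂, C₃ with T₁ = σ₁σ₂ and T₂ = σ₂σ₃, then C₂ is the line through the origin perpendicular to c, i.e., C₂ = {t·ic/|c| : t ∈ ℝ} ∪ {∞}; in particular σ₂ is uniquely determined by T₁ and T₂. -/
/-- A reflection of the Riemann sphere (written in the chart `ℂ`, with junk
values at the pole of the formula): `z ↦ (a·conj z + b)/(c·conj z − conj a)`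
with `b, c` real and `|a|² + bc = 1`. -/
def IsReflection (σ : ℂ → ℂ) : Prop :=
  ∃ (a : ℂ) (b c : ℝ), ‖a‖ ^ 2 + b * c = 1 ∧
    ∀ z, σ z = (a * starRingEnd ℂ z + b) / (c * starRingEnd ℂ z - starRingEnd ℂ a)

/-!
A reflection `z ↦ (a conj z + b) / (c conj z - conj a)` has matrix `M = [[a, b], [c, -conj a]]`
with `b, c` real, so `conj M * M = 1`, and `σ_M ∘ σ_N` is the Möbius map of `M * conj N`.
From `σ₂ σ₃ = T₂` we get `conj M₃ = s · conj M₂ · [[1, c], [0, 1]]` for a scalar `s`; comparing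
determinants gives `s = ±1`, and then the reality conditions on `M₃` force `C₂` to be a line
(`c₂ = 0`) perpendicular to `c`. From `σ₁ σ₂ = T₁` with `T₁ ≠ id` we then get `b₂ = 0`, i.e. `C₂`
passes through the fixed point `0` of `T₁`.
Throughout, an identity between Möbius formulas that holds off a finite set is a polynomial
identity, which absorbs the junk values at poles.
-/

open ComplexConjugate

section Field

variable {K : Type*} [Field K] [CharZero K]

lemma eq_zero_of_quadratic_eq_zero_off_finite {a b c : K} {S : Set K} (hS : S.Finite)
    (h : ∀ z ∉ S, a * z ^ 2 + b * z + c = 0) : a = 0 ∧ b = 0 ∧ c = 0 := by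
  open Polynomial in
  have hall (z : K) : a * z ^ 2 + b * z + c = 0 := by
    have hp : C a * X ^ 2 + C b * X + C c = 0 :=
      eq_zero_of_infinite_isRoot _ <| hS.infinite_compl.mono fun z hz => by simpa using h z hz
    simpa using congrArg (eval z) hp
  refine ⟨?_, ?_, ?_⟩
  · linear_combination (hall 1) / 2 + (hall (-1)) / 2 - hall 0
  · linear_combination (hall 1) / 2 - (hall (-1)) / 2
  · linear_combination hall 0

/-- At a pole the junk value `x / 0 = 0` would force `u * z + v = 0`, which, as `u ≠ 0`,
happens at one point only. -/
lemma coeffs_of_div_eq_affine_off_finite {p q r s u v : K} {S : Set K} (hS : S.Finite)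
    (hu : u ≠ 0) (h : ∀ z ∉ S, (p * z + q) / (r * z + s) = u * z + v) :
    r = 0 ∧ p = u * s ∧ q = v * s := by
  have hden : ∀ z ∉ insert (-v / u) S, r * z + s ≠ 0 := by
    intro z hz h0
    have hz' := h z fun h' => hz (Or.inr h')
    rw [h0, div_zero] at hz'
    exact hz (Or.inl (by field_simp; linear_combination -hz'))
  obtain ⟨h₂, h₁, h₀⟩ := eq_zero_of_quadratic_eq_zero_off_finite (hS.insert (-v / u))
    (a := u * r) (b := u * s + v * r - p) (c := v * s - q) fun z hz => by
      have := (div_eq_iff (hden z hz)).1 (h z fun h' => hz (Or.inr h'))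
      linear_combination -this
  have hr : r = 0 := (mul_eq_zero.1 h₂).resolve_left hu
  refine ⟨hr, ?_, ?_⟩
  · linear_combination -h₁ + v * hr
  · linear_combination -h₀

end Field

noncomputable def reflection (a : ℂ) (b c : ℝ) (z : ℂ) : ℂ :=
  (a * conj z + b) / (c * conj z - conj a)

lemma reflection_reflection {a a' z : ℂ} {b c b' c' : ℝ} (hz : c' * conj z - conj a' ≠ 0) :
    reflection a b c (reflection a' b' c' z) =
      ((a * conj a' + b * c') * z + (a * b' - b * a')) /
        ((c * conj a' - conj a * c') * z + (c * b' + conj a * a')) := by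
  have hz' : c' * z - a' ≠ 0 := fun h => hz (by simpa using congrArg conj h)
  have hconj : conj (reflection a' b' c' z) = (conj a' * z + b') / (c' * z - a') := by
    simp [reflection]
  rw [reflection, hconj, mul_div_assoc', mul_div_assoc', div_add' _ _ _ hz', div_sub' hz',
    div_div_div_cancel_right₀ hz']
  congr 1 <;> ring

lemma mul_conj_add_mul_eq_one {a : ℂ} {b c : ℝ} (h : ‖a‖ ^ 2 + b * c = 1) :
    a * conj a + b * c = 1 := by
  rw [Complex.mul_conj, Complex.normSq_eq_norm_sq]
  exact_mod_cast h

lemma finite_setOf_reflection_denom_eq_zero {a : ℂ} {b c : ℝ} (h : a * conj a + b * c = 1) :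
    {z : ℂ | c * conj z - conj a = 0}.Finite := by
  refine Set.Subsingleton.finite fun z hz w hw => ?_
  rcases eq_or_ne (c : ℂ) 0 with hc | hc
  · have ha : a = 0 := by simpa [hc] using hz
    simp [ha, hc] at h
  · exact (starRingEnd ℂ).injective <| mul_left_cancel₀ hc (sub_left_inj.1 (hz.trans hw.symm))

lemma coeffs_of_reflection_reflection_eq_affine {a a' u v : ℂ} {b c b' c' : ℝ} {E : Set ℂ}
    (hE : E.Finite) (hu : u ≠ 0) (h' : a' * conj a' + b' * c' = 1)
    (h : ∀ z ∉ E, reflection a b c (reflection a' b' c' z) = u * z + v) :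
    c * conj a' - conj a * c' = 0 ∧
      a * conj a' + b * c' = u * (c * b' + conj a * a') ∧
      a * b' - b * a' = v * (c * b' + conj a * a') :=
  coeffs_of_div_eq_affine_off_finite (hE.union (finite_setOf_reflection_denom_eq_zero h')) hu
    fun z hz => by
      rw [← reflection_reflection fun h => hz (Or.inr h)]
      exact h z fun h => hz (Or.inl h)

lemma line_perp_of_reflection_comp_eq_translation {a a₃ c s : ℂ} {b d b₃ c₃ : ℝ}
    (hc : c ≠ 0) (h₂ : a * conj a + b * d = 1) (h₃ : a₃ * conj a₃ + b₃ * c₃ = 1)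
    (hr : d * conj a₃ - conj a * c₃ = 0) (hs : d * b₃ + conj a * a₃ = s)
    (hp : a * conj a₃ + b * c₃ = s) (hq : a * b₃ - b * a₃ = c * s) :
    d = 0 ∧ a * conj c = c * conj a := by
  -- `conj M₃ = s · conj M₂ · [[1, c], [0, 1]]` entrywise, since `conj M₂ * M₂ = 1`
  have ha₃ : conj a₃ = conj a * s := by
    linear_combination conj a * hp + b * hr - conj a₃ * h₂
  have hc₃ : (c₃ : ℂ) = d * s := by
    linear_combination d * hp - a * hr - c₃ * h₂
  have hb₃ : (b₃ : ℂ) = s * (conj a * c + b) := by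
    linear_combination conj a * hq + b * hs - b₃ * h₂
  have ha₃' : a₃ = s * (a - d * c) := by
    linear_combination a * hs - d * hq - a₃ * h₂
  have hs2 : s * s = 1 := by -- `det (conj M₃) = s ^ 2 · det (conj M₂)`
    linear_combination
      h₃ - a₃ * ha₃ - conj a * s * ha₃' - b₃ * hc₃ - d * s * hb₃ - s ^ 2 * h₂
  have hs_real : conj s = s := by
    rcases mul_self_eq_one_iff.1 hs2 with rfl | rfl <;> simp
  have hs0 : s ≠ 0 := left_ne_zero_of_mul_eq_one hs2
  have hdc : (d : ℂ) * c * s = 0 := by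
    have := congrArg conj ha₃
    simp only [Complex.conj_conj, map_mul, hs_real] at this
    linear_combination ha₃' - this
  have hd : d = 0 := by
    simpa [hc, hs0] using hdc
  refine ⟨hd, mul_left_cancel₀ hs0 ?_⟩
  have := congrArg conj hb₃
  simp only [Complex.conj_ofReal, map_mul, map_add, hs_real, Complex.conj_conj] at this
  linear_combination hb₃ - this

lemma mirror_through_zero_of_reflection_comp_eq_rotation {a a₁ L : ℂ} {b b₁ c₁ : ℝ}
    (hL : L ≠ 1) (h₂ : a * conj a = 1) (h₁ : a₁ * conj a₁ + b₁ * c₁ = 1)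
    (hr : c₁ * conj a = 0) (hp : a₁ * conj a = L * (c₁ * b + conj a₁ * a))
    (hq : a₁ * b - b₁ * a = 0) : b = 0 := by
  have hc₁ : (c₁ : ℂ) = 0 := (mul_eq_zero.1 hr).resolve_right fun h => by simp [h] at h₂
  have ha₁ : a₁ ≠ 0 := by rintro rfl; simp [hc₁] at h₁
  have hqc : conj a₁ * b = b₁ * conj a := by simpa using congrArg conj (sub_eq_zero.1 hq)
  have hb₁ : (b₁ : ℂ) = L * b₁ := by
    linear_combination
      b * hp - conj a * hq + L * a * hqc + (L * b₁ - b₁) * h₂ + L * b ^ 2 * hc₁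
  have hb₁0 : (b₁ : ℂ) = 0 := by
    have : (L - 1) * b₁ = 0 := by linear_combination -hb₁
    exact (mul_eq_zero.1 this).resolve_left (sub_ne_zero.2 hL)
  have : a₁ * b = 0 := by linear_combination hq + a * hb₁0
  exact_mod_cast (mul_eq_zero.1 this).resolve_left ha₁

lemma exp_two_pi_I_mul_ne_one {α : ℝ} (hα : ∀ n : ℤ, α ≠ n) :
    Complex.exp (2 * Real.pi * Complex.I * α) ≠ 1 := by
  rw [Ne, Complex.exp_eq_one_iff]
  rintro ⟨n, hn⟩
  have h2πI : 2 * (Real.pi : ℂ) * Complex.I ≠ 0 := by simp [Real.pi_ne_zero]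
  have : (α : ℂ) = n := mul_right_cancel₀ h2πI (by linear_combination hn)
  exact hα n (by exact_mod_cast this)

lemma reflection_zero_zero (a z : ℂ) : reflection a 0 0 z = -(a / conj a) * conj z := by
  simp only [reflection, Complex.ofReal_zero, add_zero, zero_mul, zero_sub]
  ring

theorem stmt_18 (α : ℝ) (hα : ∀ n : ℤ, α ≠ n) (c : ℂ) (hc : c ≠ 0)
    (σ₁ σ₂ σ₃ : ℂ → ℂ)
    (h₁ : IsReflection σ₁) (h₂ : IsReflection σ₂) (h₃ : IsReflection σ₃)
    (E : Set ℂ) (hE : E.Finite)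
    (hT₁ : ∀ z ∉ E, σ₁ (σ₂ z) = Complex.exp (2 * Real.pi * Complex.I * α) * z)
    (hT₂ : ∀ z ∉ E, σ₂ (σ₃ z) = z + c) :
    ∀ z, σ₂ z = -(c / starRingEnd ℂ c) * starRingEnd ℂ z := by
  obtain ⟨a₁, b₁, c₁, hn₁, hσ₁⟩ := h₁
  obtain ⟨a, b, d, hn₂, hσ₂⟩ := h₂
  obtain ⟨a₃, b₃, c₃, hn₃, hσ₃⟩ := h₃
  replace hn₁ := mul_conj_add_mul_eq_one hn₁
  replace hn₂ := mul_conj_add_mul_eq_one hn₂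
  replace hn₃ := mul_conj_add_mul_eq_one hn₃
  obtain rfl : σ₁ = reflection a₁ b₁ c₁ := funext hσ₁
  obtain rfl : σ₂ = reflection a b d := funext hσ₂
  obtain rfl : σ₃ = reflection a₃ b₃ c₃ := funext hσ₃
  obtain ⟨hr, hp, hq⟩ := coeffs_of_reflection_reflection_eq_affine hE one_ne_zero hn₃
    fun z hz => (hT₂ z hz).trans (by rw [one_mul])
  rw [one_mul] at hp
  obtain ⟨rfl, hac⟩ := line_perp_of_reflection_comp_eq_translation hc hn₂ hn₃ hr rfl hp hq
  obtain ⟨hr', hp', hq'⟩ := coeffs_of_reflection_reflection_eq_affine hE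
    (Complex.exp_ne_zero _) hn₂ fun z hz => (hT₁ z hz).trans (add_zero _).symm
  have ha : a * conj a = 1 := by simpa using hn₂
  obtain rfl := mirror_through_zero_of_reflection_comp_eq_rotation
    (exp_two_pi_I_mul_ne_one hα) ha hn₁ (by simpa using hr') (by simpa using hp')
    (by simpa using hq')
  have hca : conj a ≠ 0 := right_ne_zero_of_mul_eq_one ha
  have hcc : conj c ≠ 0 := by simpa using hc
  intro z
  rw [reflection_zero_zero, (div_eq_div_iff hca hcc).2 hac]
end
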